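/- (Proposition 1, value form.) Let X and Y be real N×d matrices. Then the minimum of ‖XW − PY‖_F² over all N×N permutation matrices P and all d×d orthogonal matrices W equals ‖X‖_F² + ‖Y‖_F² − 2·max_{P} ‖Xᵀ P Y‖_*, where the maximum is over all N×N permutation matrices P. -/

import Mathlib

open Matrix

/-- `P` is a permutation matrix: the matrix of some permutation of the index set. -/
def IsPermMatrix {N : ℕ} (P : Matrix (Fin N) (Fin N) ℝ) : Prop :=
  ∃ σ : Equiv.Perm (Fin N), P = σ.permMatrix ℝ

/-- Squared Frobenius norm: `‖A‖_F² = Tr (Aᵀ A)`. -/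
def frobSq {m n : ℕ} (A : Matrix (Fin m) (Fin n) ℝ) : ℝ := (Aᵀ * A).trace

/-- Nuclear (trace) norm: `‖A‖_* = Tr √(AᵀA)`, where `√` is the PSD square root. -/
noncomputable def nuclearNorm {m n : ℕ} (A : Matrix (Fin m) (Fin n) ℝ) : ℝ :=
  ((Matrix.posSemidef_conjTranspose_mul_self A).1.eigenvectorUnitary.1 *
    diagonal ((RCLike.ofReal : ℝ → ℝ) ∘ (√·) ∘ (Matrix.posSemidef_conjTranspose_mul_self A).1.eigenvalues) *
    (star (Matrix.posSemidef_conjTranspose_mul_self A).1.eigenvectorUnitary :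
      Matrix (Fin n) (Fin n) ℝ)).trace

/-
Expanding the square, `‖XW − PY‖_F² = ‖X‖_F² + ‖Y‖_F² − 2 tr(Wᵀ XᵀPY)` for orthogonal `W` and
permutation `P`, so for fixed `P` the minimum over `W` is governed by the variational formula
`‖A‖_* = max_W tr(WᵀA)`. That formula comes from the polar decomposition `A = U S` with `U`
orthogonal and `S = √(AᵀA)`: the choice `W = U` gives `tr S`, and for any `W`, writing
`S = TᵀT` with `T = √S`, `tr(WᵀU S) ≤ tr S` is the inequality `0 ≤ ‖T Uᵀ W − T‖_F²`.
There are finitely many permutations, so the maximum over `P` is attained.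
-/

open scoped MatrixOrder InnerProductSpace

theorem LinearMap.exists_linearIsometry_comp_eq_of_norm_eq {𝕜 E V : Type*} [RCLike 𝕜]
    [AddCommGroup E] [Module 𝕜 E] [NormedAddCommGroup V] [InnerProductSpace 𝕜 V]
    [FiniteDimensional 𝕜 V] {f g : E →ₗ[𝕜] V} (h : ∀ x, ‖f x‖ = ‖g x‖) :
    ∃ U : V →ₗᵢ[𝕜] V, U.toLinearMap ∘ₗ g = f := by
  obtain ⟨s, hs⟩ := g.rangeRestrict.exists_rightInverse_of_surjective g.range_rangeRestrict
  have hgs (y : range g) : g (s y) = y := congrArg Subtype.val (LinearMap.congr_fun hs y)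
  let L : range g →ₗᵢ[𝕜] V := ⟨f ∘ₗ s, fun y => by simp [h, hgs]⟩
  refine ⟨L.extend, LinearMap.ext fun x => ?_⟩
  have hfsg : f (s (g.rangeRestrict x)) = f x := by
    rw [← sub_eq_zero, ← map_sub, ← norm_eq_zero, h, map_sub, hgs]
    simp
  simpa [L] using (L.extend_apply (g.rangeRestrict x)).trans hfsg

theorem Matrix.exists_mem_unitaryGroup_mul_eq_of_star_mul_self_eq {𝕜 n : Type*} [RCLike 𝕜]
    [Fintype n] [DecidableEq n] {A B : Matrix n n 𝕜} (h : star A * A = star B * B) :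
    ∃ W ∈ unitaryGroup n 𝕜, W * B = A := by
  set f := toEuclideanCLM (𝕜 := 𝕜) A
  set g := toEuclideanCLM (𝕜 := 𝕜) B
  have hfg : star f * f = star g * g := by simp only [f, g, ← map_star, ← map_mul, h]
  have hnorm (x) : ‖f x‖ = ‖g x‖ := by
    rw [← sq_eq_sq₀ (norm_nonneg _) (norm_nonneg _),
      ContinuousLinearMap.apply_norm_sq_eq_inner_adjoint_left,
      ContinuousLinearMap.apply_norm_sq_eq_inner_adjoint_left,
      ← ContinuousLinearMap.star_eq_adjoint, ← ContinuousLinearMap.star_eq_adjoint]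
    exact congrArg (fun T : EuclideanSpace 𝕜 n →L[𝕜] EuclideanSpace 𝕜 n ↦ RCLike.re ⟪T x, x⟫_𝕜)
      hfg
  obtain ⟨U, hU⟩ := LinearMap.exists_linearIsometry_comp_eq_of_norm_eq
    (f := (f : EuclideanSpace 𝕜 n →ₗ[𝕜] EuclideanSpace 𝕜 n)) (g := g) hnorm
  refine ⟨(toEuclideanCLM (n := n) (𝕜 := 𝕜)).symm U.toContinuousLinearMap, ?_, ?_⟩
  · rw [mem_unitaryGroup_iff']
    apply EquivLike.injective (toEuclideanCLM (n := n) (𝕜 := 𝕜))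
    rw [map_mul, map_star, StarAlgEquiv.apply_symm_apply, map_one,
      ContinuousLinearMap.star_eq_adjoint]
    exact (ContinuousLinearMap.norm_map_iff_adjoint_comp_self _).mp U.norm_map
  · apply EquivLike.injective (toEuclideanCLM (n := n) (𝕜 := 𝕜))
    rw [map_mul, StarAlgEquiv.apply_symm_apply]
    ext1 x
    exact LinearMap.congr_fun hU x

theorem Matrix.transpose_mul_self_nonneg {m n : Type*} [Fintype m] [Fintype n]
    (A : Matrix m n ℝ) : 0 ≤ Aᵀ * A := by
  rw [nonneg_iff_posSemidef, ← conjTranspose_eq_transpose_of_trivial]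
  exact posSemidef_conjTranspose_mul_self A

theorem nuclearNorm_eq_trace_sqrt {m n : ℕ} (A : Matrix (Fin m) (Fin n) ℝ) :
    nuclearNorm A = (CFC.sqrt (Aᵀ * A)).trace := by
  have hA := A.transpose_mul_self_nonneg
  rw [CFC.sqrt_eq_real_sqrt _ hA, cfcₙ_eq_cfc, (nonneg_iff_posSemidef.mp hA).1.cfc_eq,
    IsHermitian.cfc, Unitary.conjStarAlgAut_apply]
  rfl

theorem Matrix.exists_transpose_mul_self_eq_one_and_mul_sqrt_eq {n : Type*} [Fintype n]
    [DecidableEq n] (A : Matrix n n ℝ) :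
    ∃ W : Matrix n n ℝ, Wᵀ * W = 1 ∧ W * CFC.sqrt (Aᵀ * A) = A := by
  have hsqrt : star (CFC.sqrt (Aᵀ * A)) * CFC.sqrt (Aᵀ * A) = star A * A := by
    rw [(IsSelfAdjoint.of_nonneg (CFC.sqrt_nonneg _)).star_eq,
      CFC.sqrt_mul_sqrt_self _ A.transpose_mul_self_nonneg]
    rfl
  obtain ⟨W, hW, hWA⟩ := exists_mem_unitaryGroup_mul_eq_of_star_mul_self_eq hsqrt.symm
  exact ⟨W, mem_unitaryGroup_iff'.mp hW, hWA⟩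

theorem frobSq_nonneg {m n : ℕ} (A : Matrix (Fin m) (Fin n) ℝ) : 0 ≤ frobSq A :=
  (nonneg_iff_posSemidef.mp A.transpose_mul_self_nonneg).trace_nonneg

theorem frobSq_mul_sub {m n : ℕ} (X Z : Matrix (Fin m) (Fin n) ℝ) {W : Matrix (Fin n) (Fin n) ℝ}
    (hW : W * Wᵀ = 1) :
    frobSq (X * W - Z) = frobSq X + frobSq Z - 2 * (Wᵀ * (Xᵀ * Z)).trace := by
  have hcross : (Zᵀ * (X * W)).trace = (Wᵀ * (Xᵀ * Z)).trace := by
    rw [← trace_transpose]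
    simp [Matrix.mul_assoc]
  have hXW : (Wᵀ * Xᵀ * (X * W)).trace = (Xᵀ * X).trace := by
    rw [Matrix.mul_assoc, trace_mul_comm]
    simp only [Matrix.mul_assoc, hW, Matrix.mul_one]
  simp only [frobSq, transpose_sub, transpose_mul, Matrix.sub_mul, Matrix.mul_sub, trace_sub,
    hcross, hXW]
  rw [Matrix.mul_assoc Wᵀ Xᵀ Z]
  ring

theorem frobSq_mul_of_transpose_mul_self_eq_one {m n : ℕ} {P : Matrix (Fin m) (Fin m) ℝ}
    (hP : Pᵀ * P = 1) (Y : Matrix (Fin m) (Fin n) ℝ) : frobSq (P * Y) = frobSq Y := by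
  rw [frobSq, frobSq, transpose_mul, Matrix.mul_assoc, ← Matrix.mul_assoc Pᵀ, hP, Matrix.one_mul]

theorem Matrix.trace_mul_transpose_mul_self_le {n : ℕ} {Q : Matrix (Fin n) (Fin n) ℝ}
    (hQ : Qᵀ * Q = 1) (B : Matrix (Fin n) (Fin n) ℝ) :
    (Q * (Bᵀ * B)).trace ≤ (Bᵀ * B).trace := by
  have hsq := frobSq_nonneg (B * Qᵀ - B)
  rw [frobSq_mul_sub B B (by rwa [transpose_transpose]), transpose_transpose] at hsq
  unfold frobSq at hsq
  linarith

theorem isGreatest_trace_transpose_mul_nuclearNorm {n : ℕ} (A : Matrix (Fin n) (Fin n) ℝ) :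
    IsGreatest {t | ∃ W : Matrix (Fin n) (Fin n) ℝ, Wᵀ * W = 1 ∧ t = (Wᵀ * A).trace}
      (nuclearNorm A) := by
  rw [nuclearNorm_eq_trace_sqrt]
  obtain ⟨U, hU, hUA⟩ := A.exists_transpose_mul_self_eq_one_and_mul_sqrt_eq
  set S := CFC.sqrt (Aᵀ * A)
  have hUS : Uᵀ * A = S := by
    conv_lhs => rw [← hUA, ← Matrix.mul_assoc, hU, Matrix.one_mul]
  refine ⟨⟨U, hU, by rw [hUS]⟩, ?_⟩
  rintro _ ⟨W, hW, rfl⟩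
  have hS : (CFC.sqrt S)ᵀ * CFC.sqrt S = S := by
    rw [← conjTranspose_eq_transpose_of_trivial, ← star_eq_conjTranspose,
      (IsSelfAdjoint.of_nonneg (CFC.sqrt_nonneg _)).star_eq,
      CFC.sqrt_mul_sqrt_self _ (CFC.sqrt_nonneg _)]
  have hWU : (Wᵀ * U)ᵀ * (Wᵀ * U) = 1 := by
    rw [transpose_mul, transpose_transpose, Matrix.mul_assoc, ← Matrix.mul_assoc W,
      mul_eq_one_comm.mp hW, Matrix.one_mul, hU]
  calc (Wᵀ * A).trace = (Wᵀ * U * ((CFC.sqrt S)ᵀ * CFC.sqrt S)).trace := by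
        rw [hS, Matrix.mul_assoc, hUA]
    _ ≤ ((CFC.sqrt S)ᵀ * CFC.sqrt S).trace := trace_mul_transpose_mul_self_le hWU _
    _ = S.trace := by rw [hS]

theorem Equiv.Perm.transpose_permMatrix_mul_self {n R : Type*} [Fintype n] [DecidableEq n]
    [NonAssocSemiring R] (σ : Equiv.Perm n) : (σ.permMatrix R)ᵀ * σ.permMatrix R = 1 := by
  rw [transpose_permMatrix, ← permMatrix_mul, mul_inv_cancel, permMatrix_one]

/-- Proposition 1, value form: the minimum of `‖XW − PY‖_F²` over permutation
matrices `P` and orthogonal matrices `W` equals `‖X‖_F² + ‖Y‖_F² − 2 · max_P ‖Xᵀ P Y‖_*`. -/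
theorem stmt5 {N d : ℕ} (X Y : Matrix (Fin N) (Fin d) ℝ) :
    ∃ M : ℝ,
      IsGreatest {v : ℝ | ∃ P : Matrix (Fin N) (Fin N) ℝ,
        IsPermMatrix P ∧ v = nuclearNorm (Xᵀ * P * Y)} M ∧
      IsLeast {v : ℝ | ∃ (P : Matrix (Fin N) (Fin N) ℝ) (W : Matrix (Fin d) (Fin d) ℝ),
        IsPermMatrix P ∧ Wᵀ * W = 1 ∧ v = frobSq (X * W - P * Y)}
        (frobSq X + frobSq Y - 2 * M) := by
  obtain ⟨σ₀, hσ₀⟩ := Finite.exists_max fun σ : Equiv.Perm (Fin N) ↦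
    nuclearNorm (Xᵀ * σ.permMatrix ℝ * Y)
  have hexpand (σ : Equiv.Perm (Fin N)) {W : Matrix (Fin d) (Fin d) ℝ} (hW : Wᵀ * W = 1) :
      frobSq (X * W - σ.permMatrix ℝ * Y) =
        frobSq X + frobSq Y - 2 * (Wᵀ * (Xᵀ * σ.permMatrix ℝ * Y)).trace := by
    rw [frobSq_mul_sub _ _ (mul_eq_one_comm.mp hW),
      frobSq_mul_of_transpose_mul_self_eq_one σ.transpose_permMatrix_mul_self,
      Matrix.mul_assoc Xᵀ]
  refine ⟨_, ⟨⟨_, ⟨σ₀, rfl⟩, rfl⟩, ?_⟩, ?_, ?_⟩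
  · rintro _ ⟨_, ⟨σ, rfl⟩, rfl⟩
    exact hσ₀ σ
  · obtain ⟨W, hW, hWA⟩ := (isGreatest_trace_transpose_mul_nuclearNorm
      (Xᵀ * σ₀.permMatrix ℝ * Y)).1
    exact ⟨_, W, ⟨σ₀, rfl⟩, hW, by rw [hexpand σ₀ hW, ← hWA]⟩
  · rintro _ ⟨_, W, ⟨σ, rfl⟩, hW, rfl⟩
    rw [hexpand σ hW]
    linarith [(isGreatest_trace_transpose_mul_nuclearNorm (Xᵀ * σ.permMatrix ℝ * Y)).2
      ⟨W, hW, rfl⟩, hσ₀ σ]
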